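/- For every integer n ≥ 1, D^{n−1}(y·w) = ∑_{k=0}^{n−1} Q_{n,k}(0) · y^{n+k} · w^{n}, as an identity in the polynomial ring R = ℚ[a,x,y,w], where Q_{n,k}(0) ∈ ℚ denotes the evaluation of the polynomial Q_{n,k} at 0. -/

import Mathlib

/-! The derivation acts on monomials by `D (y^p w^q) = p y^(p+2) w^(q+1) + q y^(p+1) w^(q+1)`,
so `D^(n-1) (y w)` is a combination `∑ₖ cₙₖ y^(n+k) w^n` whose coefficients obey
`c₍ₙ₊₁₎ₖ = n cₙₖ + (n + k - 1) cₙ₍ₖ₋₁₎`: Shor's recurrence at `x = 0`. -/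

open Polynomial

/-- The Ramanujan–Shor polynomials `Q n k ∈ ℚ[x]`. -/
noncomputable def ramanujanShorQ : ℕ → ℤ → Polynomial ℚ
  | 0, _ => 0
  | 1, k => if k = 0 then 1 else 0
  | (n + 2), k =>
      if 0 ≤ k ∧ k ≤ (n : ℤ) + 1 then
        (Polynomial.X + Polynomial.C ((n : ℚ) + 1)) * ramanujanShorQ (n + 1) k
          + Polynomial.C (((n : ℤ) + k : ℤ) : ℚ) * ramanujanShorQ (n + 1) (k - 1)
      else 0

theorem ramanujanShorQ_of_neg (n : ℕ) {k : ℤ} (hk : k < 0) : ramanujanShorQ n k = 0 := by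
  match n with
  | 0 => rfl
  | 1 => simp [ramanujanShorQ, hk.ne]
  | n + 2 => rw [ramanujanShorQ, if_neg]; omega

theorem ramanujanShorQ_of_le (n : ℕ) {k : ℤ} (hk : n ≤ k) : ramanujanShorQ n k = 0 := by
  match n with
  | 0 => rfl
  | 1 => simp [ramanujanShorQ]; omega
  | n + 2 => rw [ramanujanShorQ, if_neg]; push_cast at hk; omega

/-- Both sides vanish outside `0 ≤ k ≤ n + 1`, so the recurrence needs no range condition. -/
theorem ramanujanShorQ_succ_succ (n : ℕ) (k : ℤ) :
    ramanujanShorQ (n + 2) k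
      = (X + C ((n : ℚ) + 1)) * ramanujanShorQ (n + 1) k
        + C ((n : ℚ) + k) * ramanujanShorQ (n + 1) (k - 1) := by
  rw [ramanujanShorQ]
  split_ifs with hk
  · push_cast; rfl
  · rcases not_and_or.mp hk with hk | hk
    · rw [ramanujanShorQ_of_neg _ (by omega), ramanujanShorQ_of_neg _ (by omega)]; simp
    · rw [ramanujanShorQ_of_le _ (by push_cast; omega), ramanujanShorQ_of_le _ (by push_cast; omega)]
      simp

section PowMulPow

variable {R A : Type*}

theorem derivation_pow_mul_pow [CommSemiring R] [CommSemiring A] [Algebra R A]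
    (D : Derivation R A A) {y w : A} (hy : D y = y ^ 3 * w) (hw : D w = y * w ^ 2) (p q : ℕ) :
    D (y ^ p * w ^ q)
      = p * y ^ (p + 2) * w ^ (q + 1) + q * y ^ (p + 1) * w ^ (q + 1) := by
  rw [Derivation.leibniz, Derivation.leibniz_pow, Derivation.leibniz_pow, hy, hw]
  rcases p with _ | p <;> rcases q with _ | q <;> simp only [smul_eq_mul, nsmul_eq_mul] <;>
    push_cast <;> ring

theorem derivation_sum_pow_mul_pow [CommRing R] [CommRing A] [Algebra R A]
    (D : Derivation R A A) {y w : A} (hy : D y = y ^ 3 * w) (hw : D w = y * w ^ 2)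
    (n : ℕ) (c : ℤ → R) (hc₀ : c (-1) = 0) (hcn : c n = 0) :
    D (∑ k ∈ Finset.range n, algebraMap R A (c k) * y ^ (n + k) * w ^ n)
      = ∑ k ∈ Finset.range (n + 1),
          algebraMap R A (n * c k + (n + k - 1) * c (k - 1)) * y ^ (n + 1 + k) * w ^ (n + 1) := by
  have hterm (k : ℕ) : D (algebraMap R A (c k) * y ^ (n + k) * w ^ n)
      = algebraMap R A (n * c k) * y ^ (n + 1 + k) * w ^ (n + 1)
        + algebraMap R A ((n + k) * c k) * y ^ (n + 2 + k) * w ^ (n + 1) := by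
    rw [mul_assoc, ← Algebra.smul_def, D.map_smul, derivation_pow_mul_pow D hy hw,
      Algebra.smul_def]
    simp only [map_mul, map_natCast]
    push_cast
    ring
  have hlast : ∑ k ∈ Finset.range (n + 1), algebraMap R A (n * c k) * y ^ (n + 1 + k) * w ^ (n + 1)
      = ∑ k ∈ Finset.range n, algebraMap R A (n * c k) * y ^ (n + 1 + k) * w ^ (n + 1) := by
    simp [Finset.sum_range_succ, hcn]
  have hshift : ∑ k ∈ Finset.range (n + 1),
        algebraMap R A ((n + k - 1) * c (k - 1)) * y ^ (n + 1 + k) * w ^ (n + 1)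
      = ∑ k ∈ Finset.range n, algebraMap R A ((n + k) * c k) * y ^ (n + 2 + k) * w ^ (n + 1) := by
    simp only [Finset.sum_range_succ', Nat.cast_zero, zero_sub, hc₀, mul_zero, map_zero, zero_mul,
      add_zero]
    refine Finset.sum_congr rfl fun k _ => ?_
    push_cast [add_sub_cancel_right]
    ring
  simp only [map_add, add_mul, Finset.sum_add_distrib]
  rw [map_sum, Finset.sum_congr rfl fun k _ => hterm k, Finset.sum_add_distrib, hlast, hshift]

end PowMulPow

open MvPolynomial in
theorem dn_yw_general (D : Derivation ℚ (MvPolynomial (Fin 4) ℚ) (MvPolynomial (Fin 4) ℚ))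
    (hDy : D (X 2) = (X 2) ^ 3 * X 3)
    (hDw : D (X 3) = X 2 * (X 3) ^ 2)
    (n : ℕ) (hn : 1 ≤ n) :
    (⇑D)^[n - 1] (X 2 * X 3)
      = ∑ k ∈ Finset.range n,
          MvPolynomial.C (Polynomial.eval 0 (ramanujanShorQ n (k : ℤ)))
            * (X 2) ^ (n + k) * (X 3) ^ n := by
  obtain ⟨m, rfl⟩ := Nat.exists_eq_add_of_le' hn
  rw [Nat.add_sub_cancel]
  clear hn
  induction m with
  | zero => simp [ramanujanShorQ]
  | succ m ih =>
    rw [Function.iterate_succ_apply', ih, ← algebraMap_eq,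
      derivation_sum_pow_mul_pow D hDy hDw _ (fun k => eval 0 (ramanujanShorQ (m + 1) k))
        (by simp [ramanujanShorQ_of_neg])
        (by simp [ramanujanShorQ_of_le])]
    refine Finset.sum_congr rfl fun k _ => ?_
    rw [ramanujanShorQ_succ_succ]
    simp only [Polynomial.eval_add, Polynomial.eval_mul, Polynomial.eval_X, Polynomial.eval_C]
    push_cast
    ring

open MvPolynomial in
theorem dn_yw (D : Derivation ℚ (MvPolynomial (Fin 4) ℚ) (MvPolynomial (Fin 4) ℚ))
    (hDa : D (X 0) = X 0 * X 1 * X 2)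
    (hDx : D (X 1) = X 1 * X 2 * X 3)
    (hDy : D (X 2) = (X 2) ^ 3 * X 3)
    (hDw : D (X 3) = X 2 * (X 3) ^ 2)
    (n : ℕ) (hn : 1 ≤ n) :
    (⇑D)^[n - 1] (X 2 * X 3)
      = ∑ k ∈ Finset.range n,
          MvPolynomial.C (Polynomial.eval 0 (ramanujanShorQ n (k : ℤ)))
            * (X 2) ^ (n + k) * (X 3) ^ n :=
  dn_yw_general D hDy hDw n hn
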